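/- Hölder approximation of the function Γ: assume in addition that B is strictly increasing on [0,1] and that its inverse B⁻¹ : [0, B(1)] → [0,1] is Hölder continuous of order θ ∈ (0,1] with constant c (i.e. |B⁻¹(x) − B⁻¹(y)| ≤ c·|x − y|^θ for all x, y ∈ [0, B(1)]). Define Γ(s) = ∫₀ˢ √(M_l(z))·p̄'(z) dz. Then there exists a constant C > 0, depending only on M_l, M_g, p_c, c and θ, such that for all s_K, s_L ∈ [0,1] and every s* lying in the closed interval with endpoints s_K and s_L: |Γ(s_L) − Γ(s_K) − √(M_l(s*))·(p̄(s_L) − p̄(s_K))| ≤ C·|B(s_L) − B(s_K)|^θ. -/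

import Mathlib

/-!
Since `Γ' = √M_l · p̄'`, the quantity to bound is
`∫_{s_K}^{s_L} (√M_l(z) − √M_l(s*)) p̄'(z) dz`. Both factors are bounded on `[0,1]`, so it is
`O(|s_L − s_K|)`, and the Hölder continuity of `B⁻¹` turns `|s_L − s_K|` into
`c · |B(s_L) − B(s_K)|^θ`.
-/

open Set intervalIntegral
open scoped Interval

section IntervalIntegral

variable {a b x y : ℝ} {φ : ℝ → ℝ}

lemma ContinuousOn.intervalIntegrable_of_mem_Icc (hφ : ContinuousOn φ (Icc a b))
    (hx : x ∈ Icc a b) (hy : y ∈ Icc a b) : IntervalIntegrable φ MeasureTheory.volume x y :=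
  (hφ.mono (uIcc_subset_Icc hx hy)).intervalIntegrable

lemma ContinuousOn.integral_sub_integral (hφ : ContinuousOn φ (Icc a b))
    (hx : x ∈ Icc a b) (hy : y ∈ Icc a b) :
    (∫ z in a..y, φ z) - ∫ z in a..x, φ z = ∫ z in x..y, φ z :=
  have ha : a ∈ Icc a b := left_mem_Icc.2 (hx.1.trans hx.2)
  integral_interval_sub_left (hφ.intervalIntegrable_of_mem_Icc ha hy)
    (hφ.intervalIntegrable_of_mem_Icc ha hx)

theorem exists_abs_integral_mul_sub_le {h g : ℝ → ℝ} (hh : ContinuousOn h (Icc a b))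
    (hg : ContinuousOn g (Icc a b)) :
    ∃ K, 0 ≤ K ∧ ∀ x ∈ Icc a b, ∀ y ∈ Icc a b, ∀ t ∈ Icc a b,
      |(∫ z in x..y, h z * g z) - h t * ∫ z in x..y, g z| ≤ K * |y - x| := by
  obtain ⟨H, hH⟩ := isCompact_Icc.exists_bound_of_continuousOn hh
  obtain ⟨G, hG⟩ := isCompact_Icc.exists_bound_of_continuousOn hg
  refine ⟨2 * max H 0 * max G 0, by positivity, fun x hx y hy t ht => ?_⟩
  have hsub : ∀ z ∈ Ι x y, z ∈ Icc a b := fun z hz =>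
    uIcc_subset_Icc hx hy (uIoc_subset_uIcc hz)
  have hH' : ∀ z ∈ Icc a b, |h z| ≤ max H 0 := fun z hz => (hH z hz).trans (le_max_left _ _)
  have hG' : ∀ z ∈ Icc a b, |g z| ≤ max G 0 := fun z hz => (hG z hz).trans (le_max_left _ _)
  have hdiff : (∫ z in x..y, h z * g z) - h t * ∫ z in x..y, g z
      = ∫ z in x..y, (h z - h t) * g z := by
    rw [← integral_const_mul]
    refine (integral_sub ((hh.mul hg).intervalIntegrable_of_mem_Icc hx hy)
      ((hg.intervalIntegrable_of_mem_Icc hx hy).const_mul _)).symm.trans ?_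
    simp only [sub_mul, Pi.mul_apply]
  rw [hdiff, ← Real.norm_eq_abs]
  refine norm_integral_le_of_norm_le_const fun z hz => ?_
  calc ‖(h z - h t) * g z‖ ≤ (|h z| + |h t|) * |g z| := by
        rw [Real.norm_eq_abs, abs_mul]
        gcongr
        exact abs_sub _ _
    _ ≤ (max H 0 + max H 0) * max G 0 := by
        gcongr
        exacts [hH' z (hsub z hz), hH' t ht, hG' z (hsub z hz)]
    _ = 2 * max H 0 * max G 0 := by ring

end IntervalIntegral

theorem holder_approximation_Gamma_general
    -- global-pressure framework
    (m0 : ℝ) (hm0 : 0 < m0)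
    (pc' Ml Mg : ℝ → ℝ)
    (hpc'_cont : ContinuousOn pc' (Set.Icc 0 1))
    (hMl_cont : ContinuousOn Ml (Set.Icc 0 1))
    (hMg_cont : ContinuousOn Mg (Set.Icc 0 1))
    (hM_lower : ∀ s ∈ Set.Icc (0:ℝ) 1, m0 ≤ Ml s + Mg s)
    (pbar B : ℝ → ℝ)
    (hpbar : ∀ s, pbar s = ∫ z in (0:ℝ)..s, Mg z / (Ml z + Mg z) * pc' z)
    (hB : ∀ s, B s = -∫ z in (0:ℝ)..s, Ml z * Mg z / (Ml z + Mg z) * pc' z)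
    -- B is strictly increasing with a θ-Hölder inverse on [0, B(1)]
    (hB_strictMono : StrictMonoOn B (Set.Icc 0 1))
    (Binv : ℝ → ℝ) (θ c : ℝ) (hc : 0 < c)
    (hBinv : ∀ s ∈ Set.Icc (0:ℝ) 1, Binv (B s) = s)
    (hBinv_holder : ∀ x ∈ Set.Icc (0:ℝ) (B 1), ∀ y ∈ Set.Icc (0:ℝ) (B 1),
      |Binv x - Binv y| ≤ c * |x - y| ^ θ)
    -- the function Γ
    (Γ : ℝ → ℝ)
    (hΓ : ∀ s, Γ s = ∫ z in (0:ℝ)..s,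
      Real.sqrt (Ml z) * (Mg z / (Ml z + Mg z) * pc' z)) :
    ∃ C : ℝ, 0 < C ∧
      ∀ sK ∈ Set.Icc (0:ℝ) 1, ∀ sL ∈ Set.Icc (0:ℝ) 1,
        ∀ sStar ∈ Set.uIcc sK sL,
          |Γ sL - Γ sK - Real.sqrt (Ml sStar) * (pbar sL - pbar sK)|
            ≤ C * |B sL - B sK| ^ θ := by
  have hM_ne : ∀ s ∈ Icc (0:ℝ) 1, Ml s + Mg s ≠ 0 := fun s hs =>
    (hm0.trans_le (hM_lower s hs)).ne'
  have hpbar'_cont : ContinuousOn (fun z => Mg z / (Ml z + Mg z) * pc' z) (Icc 0 1) :=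
    (hMg_cont.div (hMl_cont.add hMg_cont) hM_ne).mul hpc'_cont
  have hsqrt : ContinuousOn (fun z => Real.sqrt (Ml z)) (Icc 0 1) :=
    Real.continuous_sqrt.comp_continuousOn hMl_cont
  obtain ⟨K, hK, hKbound⟩ := exists_abs_integral_mul_sub_le hsqrt hpbar'_cont
  have hBmaps : MapsTo B (Icc 0 1) (Icc 0 (B 1)) := by
    simpa [hB] using hB_strictMono.monotoneOn.mapsTo_Icc
  refine ⟨K * c + 1, by positivity, fun sK hsK sL hsL sStar hsStar => ?_⟩
  have hs : |sL - sK| ≤ c * |B sL - B sK| ^ θ := by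
    simpa only [hBinv sL hsL, hBinv sK hsK] using hBinv_holder _ (hBmaps hsL) _ (hBmaps hsK)
  have hpow : 0 ≤ |B sL - B sK| ^ θ := Real.rpow_nonneg (abs_nonneg _) θ
  have hΓ_sub : Γ sL - Γ sK
      = ∫ z in sK..sL, Real.sqrt (Ml z) * (Mg z / (Ml z + Mg z) * pc' z) := by
    rw [hΓ, hΓ]
    exact (hsqrt.mul hpbar'_cont).integral_sub_integral hsK hsL
  have hpbar_sub : pbar sL - pbar sK = ∫ z in sK..sL, Mg z / (Ml z + Mg z) * pc' z := by
    rw [hpbar, hpbar]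
    exact hpbar'_cont.integral_sub_integral hsK hsL
  rw [hΓ_sub, hpbar_sub]
  calc _ ≤ K * |sL - sK| := hKbound sK hsK sL hsL sStar (uIcc_subset_Icc hsK hsL hsStar)
    _ ≤ K * (c * |B sL - B sK| ^ θ) := by gcongr
    _ ≤ (K * c + 1) * |B sL - B sK| ^ θ := by nlinarith

/-- Hölder approximation of the function `Γ`: assume in addition that
`B` is strictly increasing on `[0,1]` and that its inverse
`B⁻¹ : [0,B(1)] → [0,1]` is Hölder continuous of order `θ ∈ (0,1]` with constant
`c`. Define `Γ(s) = ∫₀ˢ √(M_l(z))·p̄'(z) dz` (with `p̄'(z) = (M_g(z)/M(z))·p_c'(z)`).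
Then there exists `C > 0`, depending only on `M_l, M_g, p_c, c, θ`, such that for
all `s_K, s_L ∈ [0,1]` and every `s*` in the closed interval with endpoints
`s_K, s_L`:
`|Γ(s_L) − Γ(s_K) − √(M_l(s*))·(p̄(s_L) − p̄(s_K))| ≤ C·|B(s_L) − B(s_K)|^θ`. -/
theorem holder_approximation_Gamma
    -- global-pressure framework
    (m0 : ℝ) (hm0 : 0 < m0)
    (pc pc' Ml Mg : ℝ → ℝ)
    (hpc_deriv : ∀ s ∈ Set.Icc (0:ℝ) 1, HasDerivWithinAt pc (pc' s) (Set.Icc 0 1) s)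
    (hpc'_cont : ContinuousOn pc' (Set.Icc 0 1))
    (hpc'_neg : ∀ s ∈ Set.Icc (0:ℝ) 1, pc' s < 0)
    (hMl_cont : ContinuousOn Ml (Set.Icc 0 1))
    (hMg_cont : ContinuousOn Mg (Set.Icc 0 1))
    (hMl_nonneg : ∀ s ∈ Set.Icc (0:ℝ) 1, 0 ≤ Ml s)
    (hMg_nonneg : ∀ s ∈ Set.Icc (0:ℝ) 1, 0 ≤ Mg s)
    (hMl_mono : MonotoneOn Ml (Set.Icc 0 1))
    (hMg_anti : AntitoneOn Mg (Set.Icc 0 1))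
    (hM_lower : ∀ s ∈ Set.Icc (0:ℝ) 1, m0 ≤ Ml s + Mg s)
    (ptilde pbar B : ℝ → ℝ)
    (hptilde : ∀ s, ptilde s = -∫ z in (0:ℝ)..s, Ml z / (Ml z + Mg z) * pc' z)
    (hpbar : ∀ s, pbar s = ∫ z in (0:ℝ)..s, Mg z / (Ml z + Mg z) * pc' z)
    (hB : ∀ s, B s = -∫ z in (0:ℝ)..s, Ml z * Mg z / (Ml z + Mg z) * pc' z)
    -- B is strictly increasing with a θ-Hölder inverse on [0, B(1)]
    (hB_strictMono : StrictMonoOn B (Set.Icc 0 1))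
    (Binv : ℝ → ℝ) (θ c : ℝ) (hθ : θ ∈ Set.Ioc (0:ℝ) 1) (hc : 0 < c)
    (hBinv : ∀ s ∈ Set.Icc (0:ℝ) 1, Binv (B s) = s)
    (hBinv_holder : ∀ x ∈ Set.Icc (0:ℝ) (B 1), ∀ y ∈ Set.Icc (0:ℝ) (B 1),
      |Binv x - Binv y| ≤ c * |x - y| ^ θ)
    -- the function Γ
    (Γ : ℝ → ℝ)
    (hΓ : ∀ s, Γ s = ∫ z in (0:ℝ)..s,
      Real.sqrt (Ml z) * (Mg z / (Ml z + Mg z) * pc' z)) :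
    ∃ C : ℝ, 0 < C ∧
      ∀ sK ∈ Set.Icc (0:ℝ) 1, ∀ sL ∈ Set.Icc (0:ℝ) 1,
        ∀ sStar ∈ Set.uIcc sK sL,
          |Γ sL - Γ sK - Real.sqrt (Ml sStar) * (pbar sL - pbar sK)|
            ≤ C * |B sL - B sK| ^ θ :=
  holder_approximation_Gamma_general m0 hm0 pc' Ml Mg hpc'_cont hMl_cont hMg_cont hM_lower pbar B
    hpbar hB hB_strictMono Binv θ c hc hBinv hBinv_holder Γ hΓ
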